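/- arXiv:0902.2315 — 4 statements merged into one kernel-verified Lean document; each statement's English description precedes it below -/
import Mathlib

section
/- Let 0 < α < β and ε > 0. There exists B > 0 such that for all t₁ > B and all t₂ ≥ (β/α + ε) t₁, setting u = t₂ - t₁, one has e^{α u} e^{(α - β) t₁} - α u - 1 > 0. -/
/-! With `y = α t₂ - β t₁ ≥ ε α t₁`, the expression equals `exp y - y - 1 - (β - α) t₁`, and
`exp y - y - 1 ≥ y ^ 2 / 2 ≥ (ε α t₁) ^ 2 / 2` grows quadratically in `t₁`, so it beats the
linear term `(β - α) t₁` once `t₁` is large. -/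

open Real

theorem exists_forall_add_linear_lt_exp (c : ℝ) {δ : ℝ} (hδ : 0 < δ) :
    ∃ B > (0 : ℝ), ∀ t > B, ∀ y ≥ δ * t, y + 1 + c * t < exp y := by
  refine ⟨max 1 (2 * |c| / δ ^ 2), by positivity, fun t ht y hy => ?_⟩
  have ht₀ : 0 < t := lt_of_lt_of_le one_pos (le_max_left _ _) |>.trans ht
  have hct : 2 * c < δ ^ 2 * t := by
    have := (div_lt_iff₀' (by positivity)).1 ((le_max_right _ _).trans_lt ht)
    linarith [le_abs_self c]
  have hδt : 0 < δ * t := mul_pos hδ ht₀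
  have hsq : (δ * t) ^ 2 ≤ y ^ 2 := pow_le_pow_left₀ hδt.le hy 2
  calc y + 1 + c * t < 1 + y + y ^ 2 / 2 := by nlinarith
    _ ≤ exp y := quadratic_le_exp_of_nonneg (hδt.le.trans hy)

theorem lemma61_case2_b_general (α β ε : ℝ) (hα : 0 < α) (hε : 0 < ε) :
    ∃ B > (0 : ℝ), ∀ t₁ > B, ∀ t₂ ≥ (β / α + ε) * t₁,
      Real.exp (α * (t₂ - t₁)) * Real.exp ((α - β) * t₁) - α * (t₂ - t₁) - 1 > 0 := by
  obtain ⟨B, hB, hlt⟩ := exists_forall_add_linear_lt_exp (β - α) (mul_pos hε hα)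
  refine ⟨B, hB, fun t₁ ht₁ t₂ ht₂ => ?_⟩
  have hy : ε * α * t₁ ≤ α * t₂ - β * t₁ := by
    have hexpand : α * ((β / α + ε) * t₁) = β * t₁ + ε * α * t₁ := by field_simp
    linarith [mul_le_mul_of_nonneg_left ht₂ hα.le]
  have hexp : exp (α * (t₂ - t₁)) * exp ((α - β) * t₁) = exp (α * t₂ - β * t₁) := by
    rw [← exp_add]; ring_nf
  have hbound := hlt t₁ ht₁ _ hy
  rw [hexp]
  linarith

theorem lemma61_case2_b (α β ε : ℝ) (hα : 0 < α) (hαβ : α < β) (hε : 0 < ε) :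
    ∃ B > (0 : ℝ), ∀ t₁ > B, ∀ t₂ ≥ (β / α + ε) * t₁,
      Real.exp (α * (t₂ - t₁)) * Real.exp ((α - β) * t₁) - α * (t₂ - t₁) - 1 > 0 :=
  lemma61_case2_b_general α β ε hα hε
end

section
/- Let N ≥ 2 be an integer, 0 < a ≤ b, and let A : ℝ≥0 → ℝ>0 be a function satisfying e^{-(N-1) b s} ≤ A(t+s)/A(t) ≤ e^{-(N-1) a s} for all t, s ≥ 0. Define δ = limsup_{R→∞} (1/R) ln(1/A(R/2)) and δ⁻ = liminf_{R→∞} (1/R) ln(1/A(R/2)). Then (N-1)a/2 ≤ δ⁻ ≤ δ ≤ (N-1)b/2, and in particular δ/δ⁻ ≤ b/a. -/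
/-!
Taking `t = 0` in the ratio bounds and applying `log` gives, for every `R ≥ 0`,
`(N-1)a/2 · R - log A(0) ≤ log (1/A(R/2)) ≤ (N-1)b/2 · R - log A(0)`.
Dividing by `R`, the quotient is squeezed between two functions converging to `(N-1)a/2` and
`(N-1)b/2`, which bounds its `liminf` and `limsup`; the ratio bound follows since `δ⁻ > 0`.
-/

open Filter Topology

section Squeeze

variable {ι α : Type*} [ConditionallyCompleteLinearOrder α] [TopologicalSpace α]
  [OrderTopology α] {l : Filter ι} [l.NeBot] {f g h : ι → α} {x y : α}

theorem le_liminf_and_liminf_le_limsup_and_limsup_le_of_squeeze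
    (hg : Tendsto g l (𝓝 x)) (hh : Tendsto h l (𝓝 y))
    (hgf : ∀ᶠ i in l, g i ≤ f i) (hfh : ∀ᶠ i in l, f i ≤ h i) :
    x ≤ liminf f l ∧ liminf f l ≤ limsup f l ∧ limsup f l ≤ y := by
  have hf_le : IsBoundedUnder (· ≤ ·) l f := hh.isBoundedUnder_le.mono_le hfh
  have hf_ge : IsBoundedUnder (· ≥ ·) l f := hg.isBoundedUnder_ge.mono_ge hgf
  refine ⟨?_, liminf_le_limsup hf_le hf_ge, ?_⟩
  · rw [← hg.liminf_eq]
    exact liminf_le_liminf hgf hg.isBoundedUnder_ge hf_le.isCoboundedUnder_ge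
  · rw [← hh.limsup_eq]
    exact limsup_le_limsup hfh hf_ge.isCoboundedUnder_le hh.isBoundedUnder_le

end Squeeze

theorem le_liminf_and_liminf_le_limsup_and_limsup_le_of_affine_bounds {F : ℝ → ℝ}
    {α β c d : ℝ} (hF : ∀ᶠ R in atTop, α * R + c ≤ F R ∧ F R ≤ β * R + d) :
    α ≤ liminf (fun R => F R / R) atTop ∧
      liminf (fun R => F R / R) atTop ≤ limsup (fun R => F R / R) atTop ∧
        limsup (fun R => F R / R) atTop ≤ β := by
  have h_affine_div {γ e : ℝ} : Tendsto (fun R : ℝ => γ + e / R) atTop (𝓝 γ) := by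
    simpa using (tendsto_const_nhds (x := γ)).add
      ((tendsto_const_nhds (x := e)).div_atTop tendsto_id)
  refine le_liminf_and_liminf_le_limsup_and_limsup_le_of_squeeze
    (h_affine_div (γ := α) (e := c)) (h_affine_div (γ := β) (e := d)) ?_ ?_
  all_goals
    filter_upwards [hF, eventually_gt_atTop 0] with R ⟨hlo, hhi⟩ hR
    rw [add_div' _ _ _ hR.ne']
    gcongr

theorem log_inv_bounds_of_exp_le_div {x y u v : ℝ} (hx : 0 < x) (hy : 0 < y)
    (h : Real.exp u ≤ y / x ∧ y / x ≤ Real.exp v) :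
    -v - Real.log x ≤ Real.log (1 / y) ∧ Real.log (1 / y) ≤ -u - Real.log x := by
  have hlog_inv : Real.log (1 / y) = -Real.log (y / x) - Real.log x := by
    rw [one_div, Real.log_inv, Real.log_div hy.ne' hx.ne']
    ring
  have hlo : u ≤ Real.log (y / x) := (Real.le_log_iff_exp_le (div_pos hy hx)).2 h.1
  have hhi : Real.log (y / x) ≤ v := (Real.log_le_iff_le_exp (div_pos hy hx)).2 h.2
  constructor <;> linarith

theorem parabolic_exponent_pinching_general (N : ℕ) (hN : 2 ≤ N) (a b : ℝ)
    (ha : 0 < a) (A : ℝ → ℝ) (hApos : ∀ t, 0 ≤ t → 0 < A t)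
    (hA : ∀ t ≥ (0 : ℝ), ∀ s ≥ (0 : ℝ),
      Real.exp (-(N - 1 : ℝ) * b * s) ≤ A (t + s) / A t ∧
        A (t + s) / A t ≤ Real.exp (-(N - 1 : ℝ) * a * s))
    (δ δminus : ℝ)
    (hδ : Filter.limsup (fun R : ℝ => Real.log (1 / A (R / 2)) / R) atTop = δ)
    (hδm : Filter.liminf (fun R : ℝ => Real.log (1 / A (R / 2)) / R) atTop = δminus) :
    (N - 1 : ℝ) * a / 2 ≤ δminus ∧ δminus ≤ δ ∧ δ ≤ (N - 1 : ℝ) * b / 2 ∧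
      δ / δminus ≤ b / a := by
  have hN1 : (0 : ℝ) < N - 1 := by
    have : (2 : ℝ) ≤ N := by exact_mod_cast hN
    linarith
  have hbounds : ∀ᶠ R in atTop,
      (N - 1 : ℝ) * a / 2 * R - Real.log (A 0) ≤ Real.log (1 / A (R / 2)) ∧
        Real.log (1 / A (R / 2)) ≤ (N - 1 : ℝ) * b / 2 * R - Real.log (A 0) := by
    filter_upwards [eventually_ge_atTop 0] with R hR
    have hs : 0 ≤ R / 2 := by positivity
    obtain ⟨hlo, hhi⟩ := log_inv_bounds_of_exp_le_div (hApos 0 le_rfl) (hApos _ hs)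
      (zero_add (R / 2) ▸ hA 0 le_rfl (R / 2) hs)
    constructor <;> linarith
  have hexponents := le_liminf_and_liminf_le_limsup_and_limsup_le_of_affine_bounds hbounds
  rw [hδ, hδm] at hexponents
  obtain ⟨hlower, hmid, hupper⟩ := hexponents
  refine ⟨hlower, hmid, hupper, ?_⟩
  have hlower_pos : 0 < (N - 1 : ℝ) * a / 2 := by positivity
  calc δ / δminus ≤ (N - 1 : ℝ) * b / 2 / ((N - 1 : ℝ) * a / 2) :=
        div_le_div₀ (by linarith) hupper hlower_pos hlower
    _ = b / a := by field_simp

theorem parabolic_exponent_pinching (N : ℕ) (hN : 2 ≤ N) (a b : ℝ)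
    (ha : 0 < a) (hab : a ≤ b) (A : ℝ → ℝ) (hApos : ∀ t, 0 ≤ t → 0 < A t)
    (hA : ∀ t ≥ (0 : ℝ), ∀ s ≥ (0 : ℝ),
      Real.exp (-(N - 1 : ℝ) * b * s) ≤ A (t + s) / A t ∧
        A (t + s) / A t ≤ Real.exp (-(N - 1 : ℝ) * a * s))
    (δ δminus : ℝ)
    (hδ : Filter.limsup (fun R : ℝ => Real.log (1 / A (R / 2)) / R) atTop = δ)
    (hδm : Filter.liminf (fun R : ℝ => Real.log (1 / A (R / 2)) / R) atTop = δminus) :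
    (N - 1 : ℝ) * a / 2 ≤ δminus ∧ δminus ≤ δ ∧ δ ≤ (N - 1 : ℝ) * b / 2 ∧
      δ / δminus ≤ b / a :=
  parabolic_exponent_pinching_general N hN a b ha A hApos hA δ δminus hδ hδm
end

section
/- Let A : ℝ≥0 → ℝ>0 be nonincreasing, and suppose there exist 0 < a ≤ b with e^{-bs} ≤ A(t+s)/A(t) ≤ e^{-as} for all t,s ≥ 0. Define δ = limsup_{R→∞} (1/R) ln(1/A(R/2)), δ⁻ = liminf_{R→∞} (1/R) ln(1/A(R/2)), and F(R) = ∫_0^R A(t)/A((t+R)/2) dt. If δ ≤ 2δ⁻, then for every ε > 0 there exists C > 0 such that F(R) ≤ C e^{(δ + 3ε) R} for all sufficiently large R; in particular limsup_{R→∞} (1/R) ln F(R) ≤ δ. -/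
/-!
For every `ε > 0` the decay rates give `A t ≤ C e^{-(2δ⁻ - ε) t}` for all `t ≥ 0` (an eventual
bound, extended to the initial range by monotonicity) and `A u ≥ e^{-(2δ + ε) u}` for large `u`.
So the integrand of `F R` is at most `C e^{(δ - 2δ⁻ + 3ε/2) t + (δ + ε/2) R} ≤ C e^{(δ + 2ε) R}`
by pinching, and integrating over `[0, R]` costs a factor `R ≤ e^{ε R} / ε`.
The two-sided exponential bounds on `A` make `log (1 / A (R / 2)) / R` bounded, so `δ⁻ ≤ δ`;
together with pinching this gives `δ ≥ 0`, which turns the exponential bound into the bound on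
`limsup log (F R) / R`.
-/

open Filter Real Set

/-- The exponent whose `limsup` and `liminf` are `δ` and `δ⁻`. -/
noncomputable def decayRate (A : ℝ → ℝ) (R : ℝ) : ℝ :=
  log (1 / A (R / 2)) / R

-- Without coboundedness the set in `limsup_eq` is not bounded below, and its `sInf` is `0`.
lemma limsup_le_of_eventually_le_of_nonneg {α : Type*} {l : Filter α} {u : α → ℝ} {a : ℝ}
    (ha : 0 ≤ a) (h : ∀ᶠ x in l, u x ≤ a) : limsup u l ≤ a := by
  by_cases hc : IsCoboundedUnder (· ≤ ·) l u
  · exact limsup_le_of_le hc h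
  · rw [limsup_eq, Real.sInf_of_not_bddBelow]
    · exact ha
    · rintro ⟨c, hcb⟩
      exact hc ⟨c, fun a' ha' => hcb (eventually_map.mp ha')⟩

lemma limsup_log_div_le {f : ℝ → ℝ} {δ : ℝ} (hδ : 0 ≤ δ)
    (h : ∀ ε > 0, ∃ C > 0, ∀ᶠ R in atTop, |f R| ≤ C * exp ((δ + ε) * R)) :
    limsup (fun R => log (f R) / R) atTop ≤ δ := by
  refine le_of_forall_pos_le_add fun ε hε => ?_
  obtain ⟨C, hC, hf⟩ := h (ε / 2) (by positivity)
  refine limsup_le_of_eventually_le_of_nonneg (by positivity) ?_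
  filter_upwards [hf, eventually_gt_atTop 0,
    (tendsto_id.const_mul_atTop (half_pos hε)).eventually_ge_atTop |log C|] with R hfR hR hCR
  rw [id] at hCR
  have hlog : log (f R) ≤ log C + (δ + ε / 2) * R := by
    rcases eq_or_ne (f R) 0 with h0 | h0
    · rw [h0, log_zero]
      nlinarith [neg_abs_le (log C), mul_nonneg hδ hR.le]
    · calc log (f R) = log |f R| := (log_abs _).symm
        _ ≤ log (C * exp ((δ + ε / 2) * R)) := log_le_log (abs_pos.mpr h0) hfR
        _ = log C + (δ + ε / 2) * R := by rw [log_mul hC.ne' (exp_ne_zero _), log_exp]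
  rw [div_le_iff₀ hR]
  linarith [le_abs_self (log C)]

section Horosphere

variable {A : ℝ → ℝ}

lemma abs_log_inv_le {a b s : ℝ} (hA0 : 0 < A 0) (hAs : 0 < A s) (hs : 0 ≤ s)
    (hlow : exp (-b * s) ≤ A s / A 0) (hup : A s / A 0 ≤ exp (-a * s)) :
    |log (1 / A s)| ≤ (|a| + |b|) * s + |log (A 0)| := by
  have hlog_low := (le_log_iff_exp_le (div_pos hAs hA0)).mpr hlow
  have hlog_up := (log_le_iff_le_exp (div_pos hAs hA0)).mpr hup
  rw [log_div hAs.ne' hA0.ne'] at hlog_low hlog_up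
  rw [one_div, log_inv, abs_neg, abs_le]
  have := mul_le_mul_of_nonneg_right (neg_abs_le a) hs
  have := mul_le_mul_of_nonneg_right (le_abs_self b) hs
  constructor <;> linarith [le_abs_self (log (A 0)), neg_abs_le (log (A 0)),
    mul_nonneg (abs_nonneg a) hs, mul_nonneg (abs_nonneg b) hs]

lemma isBoundedUnder_decayRate {a b : ℝ} (hApos : ∀ t, 0 ≤ t → 0 < A t)
    (hA : ∀ s ≥ (0 : ℝ), exp (-b * s) ≤ A s / A 0 ∧ A s / A 0 ≤ exp (-a * s)) :
    IsBoundedUnder (· ≤ ·) atTop (decayRate A) ∧ IsBoundedUnder (· ≥ ·) atTop (decayRate A) := by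
  refine isBoundedUnder_le_abs.mp
    (isBoundedUnder_of_eventually_le (a := (|a| + |b|) / 2 + |log (A 0)|) ?_)
  filter_upwards [eventually_ge_atTop 1] with R hR
  have hR0 : 0 < R := by linarith
  have hR2 : 0 ≤ R / 2 := by positivity
  obtain ⟨hlow, hup⟩ := hA (R / 2) hR2
  have hlog := abs_log_inv_le (hApos 0 le_rfl) (hApos _ hR2) hR2 hlow hup
  rw [decayRate, abs_div, abs_of_pos hR0, div_le_iff₀ hR0]
  nlinarith [abs_nonneg (log (A 0))]

lemma eventually_le_exp_of_lt_liminf (hApos : ∀ t, 0 ≤ t → 0 < A t)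
    (hbdd : IsBoundedUnder (· ≥ ·) atTop (decayRate A)) {c : ℝ}
    (hc : c < liminf (decayRate A) atTop) : ∀ᶠ t in atTop, A t ≤ exp (-(2 * c) * t) := by
  filter_upwards [(tendsto_id.const_mul_atTop two_pos).eventually
    (eventually_lt_of_lt_liminf hc hbdd), eventually_gt_atTop 0] with t ht ht0
  rw [decayRate, id, mul_div_cancel_left₀ t two_ne_zero, one_div, log_inv,
    lt_div_iff₀ (by positivity)] at ht
  exact (log_le_iff_le_exp (hApos t ht0.le)).mp (by linarith)

lemma eventually_exp_le_of_limsup_lt (hApos : ∀ t, 0 ≤ t → 0 < A t)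
    (hbdd : IsBoundedUnder (· ≤ ·) atTop (decayRate A)) {c : ℝ}
    (hc : limsup (decayRate A) atTop < c) : ∀ᶠ t in atTop, exp (-(2 * c) * t) ≤ A t := by
  filter_upwards [(tendsto_id.const_mul_atTop two_pos).eventually
    (eventually_lt_of_limsup_lt hc hbdd), eventually_gt_atTop 0] with t ht ht0
  rw [decayRate, id, mul_div_cancel_left₀ t two_ne_zero, one_div, log_inv,
    div_lt_iff₀ (by positivity)] at ht
  exact (le_log_iff_exp_le (hApos t ht0.le)).mp (by linarith)

lemma exists_forall_le_mul_exp (hAanti : AntitoneOn A (Ici 0)) (hA0 : 0 ≤ A 0) {c : ℝ}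
    (h : ∀ᶠ t in atTop, A t ≤ exp (-c * t)) : ∃ C > 0, ∀ t ≥ 0, A t ≤ C * exp (-c * t) := by
  obtain ⟨T, hT⟩ := eventually_atTop.mp h
  refine ⟨max 1 (A 0 * exp (|c| * T)), by positivity, fun t ht => ?_⟩
  rcases le_total T t with hTt | htT
  · exact (hT t hTt).trans (le_mul_of_one_le_left (exp_pos _).le (le_max_left _ _))
  have hexp : 0 ≤ |c| * T + -c * t := by
    nlinarith [mul_le_mul_of_nonneg_right (le_abs_self c) ht,
      mul_le_mul_of_nonneg_left htT (abs_nonneg c)]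
  calc A t ≤ A 0 := hAanti (mem_Ici.mpr le_rfl) ht ht
    _ ≤ A 0 * exp (|c| * T + -c * t) := le_mul_of_one_le_right hA0 (one_le_exp hexp)
    _ = A 0 * exp (|c| * T) * exp (-c * t) := by rw [exp_add, mul_assoc]
    _ ≤ max 1 (A 0 * exp (|c| * T)) * exp (-c * t) := by gcongr; exact le_max_right _ _

lemma abs_integral_div_le {c₁ c₂ η C T R : ℝ} (hApos : ∀ t, 0 ≤ t → 0 < A t)
    (hup : ∀ t ≥ 0, A t ≤ C * exp (-(2 * c₁) * t))
    (hlow : ∀ u ≥ T, exp (-(2 * c₂) * u) ≤ A u)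
    (hη : c₂ - 2 * c₁ ≤ η) (hη0 : 0 ≤ η) (hR : 0 ≤ R) (hTR : T ≤ R / 2) :
    |∫ t in (0 : ℝ)..R, A t / A ((t + R) / 2)| ≤ C * exp ((c₂ + η) * R) * R := by
  have hC : 0 < C := by simpa using (hApos 0 le_rfl).trans_le (hup 0 le_rfl)
  have hbound : ∀ t ∈ uIoc (0 : ℝ) R, ‖A t / A ((t + R) / 2)‖ ≤ C * exp ((c₂ + η) * R) := by
    rw [uIoc_of_le hR]
    rintro t ⟨ht0, htR⟩
    have hmid : 0 < A ((t + R) / 2) := hApos _ (by linarith)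
    rw [Real.norm_eq_abs, abs_of_pos (div_pos (hApos t ht0.le) hmid)]
    calc A t / A ((t + R) / 2)
        ≤ C * exp (-(2 * c₁) * t) / exp (-(2 * c₂) * ((t + R) / 2)) :=
          div_le_div₀ (by positivity) (hup t ht0.le) (exp_pos _) (hlow _ (by linarith))
      _ = C * exp ((c₂ - 2 * c₁) * t + c₂ * R) := by
          rw [mul_div_assoc, ← exp_sub]; ring_nf
      _ ≤ C * exp ((c₂ + η) * R) := by
          gcongr; nlinarith [mul_le_mul_of_nonneg_left htR hη0]
  simpa [abs_of_nonneg hR] using intervalIntegral.norm_integral_le_of_norm_le_const hbound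

lemma exists_abs_integral_div_le {δ δ' ε : ℝ} (hApos : ∀ t, 0 ≤ t → 0 < A t)
    (hAanti : AntitoneOn A (Ici 0))
    (hbdd : IsBoundedUnder (· ≤ ·) atTop (decayRate A) ∧
      IsBoundedUnder (· ≥ ·) atTop (decayRate A))
    (hδ : limsup (decayRate A) atTop = δ) (hδ' : liminf (decayRate A) atTop = δ')
    (hpinch : δ ≤ 2 * δ') (hε : 0 < ε) :
    ∃ C > 0, ∀ᶠ R in atTop,
      |∫ t in (0 : ℝ)..R, A t / A ((t + R) / 2)| ≤ C * exp ((δ + 3 * ε) * R) := by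
  obtain ⟨C, hC, hup⟩ := exists_forall_le_mul_exp hAanti (hApos 0 le_rfl).le
    (eventually_le_exp_of_lt_liminf hApos hbdd.2 (c := δ' - ε / 2) (by linarith))
  obtain ⟨T, hlow⟩ := eventually_atTop.mp
    (eventually_exp_le_of_limsup_lt hApos hbdd.1 (c := δ + ε / 2) (by linarith))
  refine ⟨C / ε, by positivity, ?_⟩
  filter_upwards [eventually_ge_atTop (max (2 * T) 0)] with R hR
  have hR0 : 0 ≤ R := le_of_max_le_right hR
  have hRexp : ε * R ≤ exp (ε * R) := by linarith [add_one_le_exp (ε * R)]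
  calc |∫ t in (0 : ℝ)..R, A t / A ((t + R) / 2)|
      ≤ C * exp ((δ + ε / 2 + 3 * ε / 2) * R) * R :=
        abs_integral_div_le hApos hup hlow (by linarith) (by positivity) hR0
          (by linarith [le_of_max_le_left hR])
    _ = C / ε * exp ((δ + 2 * ε) * R) * (ε * R) := by field_simp; ring_nf
    _ ≤ C / ε * exp ((δ + 2 * ε) * R) * exp (ε * R) := by gcongr
    _ = C / ε * exp ((δ + 3 * ε) * R) := by rw [mul_assoc, ← exp_add]; ring_nf

end Horosphere

theorem cuspidal_function_upper_bound_general (a b : ℝ)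
    (A : ℝ → ℝ) (hApos : ∀ t, 0 ≤ t → 0 < A t)
    (hAanti : AntitoneOn A (Set.Ici 0))
    (hA : ∀ t ≥ (0 : ℝ), ∀ s ≥ (0 : ℝ),
      Real.exp (-b * s) ≤ A (t + s) / A t ∧ A (t + s) / A t ≤ Real.exp (-a * s))
    (δ δminus : ℝ)
    (hδ : Filter.limsup (fun R : ℝ => Real.log (1 / A (R / 2)) / R) atTop = δ)
    (hδm : Filter.liminf (fun R : ℝ => Real.log (1 / A (R / 2)) / R) atTop = δminus)
    (F : ℝ → ℝ) (hF : ∀ R, F R = ∫ t in (0 : ℝ)..R, A t / A ((t + R) / 2))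
    (hpinch : δ ≤ 2 * δminus) :
    (∀ ε > (0 : ℝ), ∃ C > (0 : ℝ), ∀ᶠ R in atTop,
        F R ≤ C * Real.exp ((δ + 3 * ε) * R)) ∧
      Filter.limsup (fun R : ℝ => Real.log (F R) / R) atTop ≤ δ := by
  have hbdd := isBoundedUnder_decayRate hApos fun s hs => by
    simpa only [zero_add] using hA 0 le_rfl s hs
  have hδmδ : δminus ≤ δ := by
    rw [← hδ, ← hδm]
    exact liminf_le_limsup hbdd.1 hbdd.2
  have key : ∀ ε > 0, ∃ C > 0, ∀ᶠ R in atTop, |F R| ≤ C * exp ((δ + 3 * ε) * R) := by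
    intro ε hε
    simp only [hF]
    exact exists_abs_integral_div_le hApos hAanti hbdd hδ hδm hpinch hε
  refine ⟨fun ε hε => ?_, limsup_log_div_le (by linarith) fun ε hε => ?_⟩
  · obtain ⟨C, hC, hFR⟩ := key ε hε
    exact ⟨C, hC, hFR.mono fun R hR => (le_abs_self _).trans hR⟩
  · obtain ⟨C, hC, hFR⟩ := key (ε / 3) (by positivity)
    exact ⟨C, hC, by simpa [mul_div_cancel₀] using hFR⟩

theorem cuspidal_function_upper_bound (a b : ℝ) (ha : 0 < a) (hab : a ≤ b)
    (A : ℝ → ℝ) (hApos : ∀ t, 0 ≤ t → 0 < A t)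
    (hAanti : AntitoneOn A (Set.Ici 0))
    (hA : ∀ t ≥ (0 : ℝ), ∀ s ≥ (0 : ℝ),
      Real.exp (-b * s) ≤ A (t + s) / A t ∧ A (t + s) / A t ≤ Real.exp (-a * s))
    (δ δminus : ℝ)
    (hδ : Filter.limsup (fun R : ℝ => Real.log (1 / A (R / 2)) / R) atTop = δ)
    (hδm : Filter.liminf (fun R : ℝ => Real.log (1 / A (R / 2)) / R) atTop = δminus)
    (F : ℝ → ℝ) (hF : ∀ R, F R = ∫ t in (0 : ℝ)..R, A t / A ((t + R) / 2))
    (hpinch : δ ≤ 2 * δminus) :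
    (∀ ε > (0 : ℝ), ∃ C > (0 : ℝ), ∀ᶠ R in atTop,
        F R ≤ C * Real.exp ((δ + 3 * ε) * R)) ∧
      Filter.limsup (fun R : ℝ => Real.log (F R) / R) atTop ≤ δ :=
  cuspidal_function_upper_bound_general a b A hApos hAanti hA δ δminus hδ hδm F hF hpinch
end

section
/- Let A : ℝ≥0 → ℝ>0 be nonincreasing with e^{-bs} ≤ A(t+s)/A(t) ≤ e^{-as} for all t,s ≥ 0 (for some 0 < a ≤ b), let δ⁻ = liminf_{R→∞} (1/R) ln(1/A(R/2)), and set F(R) = ∫_0^R A(t)/A((t+R)/2) dt. Then for every ε > 0 there exists c > 0 such that F(R) ≥ c e^{(δ⁻ - ε) R} for all sufficiently large R. -/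
/-!
Only the range `t ∈ [0, 1]` of the integral is needed: there `A t ≥ A 1` and
`A ((t + R) / 2) ≤ A (R / 2)`, so `F R ≥ A 1 / A (R / 2)`, and by definition of `δ⁻` the
quantity `1 / A (R / 2)` eventually exceeds `exp ((δ⁻ - ε) R)`.
-/

open Filter MeasureTheory Set Real

theorem AntitoneOn.intervalIntegrable_div {f g : ℝ → ℝ} {u v : ℝ}
    (hf : AntitoneOn f (uIcc u v)) (hg : AntitoneOn g (uIcc u v))
    (hg_pos : ∀ x ∈ uIcc u v, 0 < g x) :
    IntervalIntegrable (fun x => f x / g x) volume u v := by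
  have hg_inv : MonotoneOn (fun x => (g x)⁻¹) (uIcc u v) := fun x hx y hy hxy =>
    inv_anti₀ (hg_pos y hy) (hg hx hy hxy)
  rw [intervalIntegrable_iff']
  exact (hf.integrableOn_isCompact isCompact_uIcc).mul_of_top_left
    (hg_inv.memLp_isCompact isCompact_uIcc)

theorem isBoundedUnder_ge_div_self {g : ℝ → ℝ} (hg : IsBoundedUnder (· ≥ ·) atTop g) :
    IsBoundedUnder (· ≥ ·) atTop fun R => g R / R := by
  obtain ⟨C, hC⟩ := hg
  refine isBoundedUnder_of_eventually_ge (a := min C 0) ?_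
  filter_upwards [hC, eventually_ge_atTop 1] with R hCR hR
  rcases le_or_gt 0 (g R) with hgR | hgR
  · exact (min_le_right _ _).trans (div_nonneg hgR (by linarith))
  · exact (min_le_left _ _).trans (hCR.trans ((le_div_iff₀ (by linarith)).2 (by nlinarith)))

theorem eventually_exp_mul_le_of_lt_liminf {g : ℝ → ℝ} (hg : ∀ᶠ R in atTop, 0 < g R)
    (hbdd : IsBoundedUnder (· ≥ ·) atTop fun R => log (g R) / R) {δ : ℝ}
    (hδ : δ < liminf (fun R => log (g R) / R) atTop) :
    ∀ᶠ R in atTop, exp (δ * R) ≤ g R := by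
  filter_upwards [eventually_lt_of_lt_liminf hδ hbdd, hg, eventually_gt_atTop 0]
    with R hδR hgR hR
  calc exp (δ * R) ≤ exp (log (g R)) := exp_le_exp.2 ((lt_div_iff₀ hR).1 hδR).le
    _ = g R := exp_log hgR

section Profile

variable {A : ℝ → ℝ} (hApos : ∀ t, 0 ≤ t → 0 < A t) (hAanti : AntitoneOn A (Ici 0))
include hApos hAanti

theorem isBoundedUnder_ge_log_inv_half :
    IsBoundedUnder (· ≥ ·) atTop fun R => log (1 / A (R / 2)) := by
  refine isBoundedUnder_of_eventually_ge (a := -log (A 0)) ?_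
  filter_upwards [eventually_ge_atTop 0] with R hR
  have hR2 : (0 : ℝ) ≤ R / 2 := by linarith
  rw [one_div, log_inv, neg_le_neg_iff]
  exact log_le_log (hApos _ hR2) (hAanti self_mem_Ici hR2 hR2)

theorem intervalIntegrable_div_half_add {R : ℝ} (hR : 0 ≤ R) :
    IntervalIntegrable (fun t => A t / A ((t + R) / 2)) volume 0 R := by
  have hmem : ∀ t ∈ uIcc 0 R, 0 ≤ t ∧ 0 ≤ (t + R) / 2 := by
    rw [uIcc_of_le hR]
    exact fun t ht => ⟨ht.1, by linarith [ht.1]⟩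
  exact AntitoneOn.intervalIntegrable_div (hAanti.mono fun t ht => (hmem t ht).1)
    (fun x hx y hy hxy => hAanti (hmem x hx).2 (hmem y hy).2 (by linarith))
    (fun t ht => hApos _ (hmem t ht).2)

theorem div_le_div_half_add_of_mem_Icc {R t : ℝ} (hR : 0 ≤ R) (ht : t ∈ Icc (0 : ℝ) 1) :
    A 1 / A (R / 2) ≤ A t / A ((t + R) / 2) := by
  obtain ⟨ht0, ht1⟩ := ht
  have hmid : 0 ≤ (t + R) / 2 := by linarith
  exact div_le_div₀ (hApos t ht0).le (hAanti ht0 (mem_Ici.2 zero_le_one) ht1) (hApos _ hmid)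
    (hAanti (by linarith : (0 : ℝ) ≤ R / 2) hmid (by linarith))

theorem div_le_integral_div_half_add {R : ℝ} (hR : 1 ≤ R) :
    A 1 / A (R / 2) ≤ ∫ t in (0 : ℝ)..R, A t / A ((t + R) / 2) := by
  have hR0 : (0 : ℝ) ≤ R := by linarith
  have hint := intervalIntegrable_div_half_add hApos hAanti hR0
  calc A 1 / A (R / 2) = ∫ _ in (0 : ℝ)..1, A 1 / A (R / 2) := by simp
    _ ≤ ∫ t in (0 : ℝ)..1, A t / A ((t + R) / 2) := by
      refine intervalIntegral.integral_mono_on zero_le_one intervalIntegrable_const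
        (hint.mono_set ?_) fun t ht => div_le_div_half_add_of_mem_Icc hApos hAanti hR0 ht
      rw [uIcc_of_le zero_le_one, uIcc_of_le hR0]
      exact Icc_subset_Icc_right hR
    _ ≤ ∫ t in (0 : ℝ)..R, A t / A ((t + R) / 2) := by
      refine intervalIntegral.integral_mono_interval le_rfl zero_le_one hR ?_ hint
      refine (ae_restrict_iff' measurableSet_Ioc).2 (ae_of_all _ fun t ht => ?_)
      exact div_nonneg (hApos t ht.1.le).le (hApos _ (by linarith [ht.1])).le

end Profile

theorem cuspidal_function_lower_bound_general
    (A : ℝ → ℝ) (hApos : ∀ t, 0 ≤ t → 0 < A t)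
    (hAanti : AntitoneOn A (Set.Ici 0))
    (δminus : ℝ)
    (hδm : Filter.liminf (fun R : ℝ => Real.log (1 / A (R / 2)) / R) atTop = δminus)
    (F : ℝ → ℝ) (hF : ∀ R, F R = ∫ t in (0 : ℝ)..R, A t / A ((t + R) / 2)) :
    ∀ ε > (0 : ℝ), ∃ c > (0 : ℝ), ∀ᶠ R in atTop,
      c * Real.exp ((δminus - ε) * R) ≤ F R := by
  subst hδm
  intro ε hε
  have hAinv : ∀ᶠ R in atTop, 0 < 1 / A (R / 2) := by
    filter_upwards [eventually_ge_atTop 0] with R hR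
    exact one_div_pos.2 (hApos _ (by linarith))
  have hexp := eventually_exp_mul_le_of_lt_liminf hAinv
    (isBoundedUnder_ge_div_self (isBoundedUnder_ge_log_inv_half hApos hAanti))
    (sub_lt_self _ hε)
  refine ⟨A 1, hApos 1 zero_le_one, ?_⟩
  filter_upwards [hexp, eventually_ge_atTop 1] with R hexpR hR
  calc _ ≤ A 1 * (1 / A (R / 2)) := by
        gcongr; exact (hApos 1 zero_le_one).le
    _ = A 1 / A (R / 2) := mul_one_div _ _
    _ ≤ F R := hF R ▸ div_le_integral_div_half_add hApos hAanti hR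

theorem cuspidal_function_lower_bound (a b : ℝ) (ha : 0 < a) (hab : a ≤ b)
    (A : ℝ → ℝ) (hApos : ∀ t, 0 ≤ t → 0 < A t)
    (hAanti : AntitoneOn A (Set.Ici 0))
    (hA : ∀ t ≥ (0 : ℝ), ∀ s ≥ (0 : ℝ),
      Real.exp (-b * s) ≤ A (t + s) / A t ∧ A (t + s) / A t ≤ Real.exp (-a * s))
    (δminus : ℝ)
    (hδm : Filter.liminf (fun R : ℝ => Real.log (1 / A (R / 2)) / R) atTop = δminus)
    (F : ℝ → ℝ) (hF : ∀ R, F R = ∫ t in (0 : ℝ)..R, A t / A ((t + R) / 2)) :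
    ∀ ε > (0 : ℝ), ∃ c > (0 : ℝ), ∀ᶠ R in atTop,
      c * Real.exp ((δminus - ε) * R) ≤ F R :=
  cuspidal_function_lower_bound_general A hApos hAanti δminus hδm F hF
end
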